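/- arXiv:2310.09833 — 2 statements merged into one kernel-verified Lean document; each statement's English description precedes it below -/
import Mathlib

section
/- Let p̂_π be the trajectory distribution induced by a history-dependent policy π with everywhere-positive action probabilities, let d(τ) = ρ₀(s₀) Π_{t=0}^{T−1} P(s_{t+1} | s_t, a_t) be the dynamics-only factor, and define the target trajectory distribution p(τ) = d(τ) · exp(Σ_{t=0}^{T} r(s_t, a_t)) / Z, where Z = Σ_τ d(τ) exp(Σ_{t=0}^{T} r(s_t, a_t)). Then p̂_π is absolutely continuous with respect to p, and the negative Kullback–Leibler divergence satisfies − D_KL(p̂_π ‖ p) = Σ_{t=0}^{T} E_{τ ∼ p̂_π}[ r(s_t, a_t) ] + Σ_{t=0}^{T} E_{τ ∼ p̂_π}[ H(π(· | h_t)) ] − log Z, where H(π(· | h_t)) is the Shannon entropy of the action distribution π(· | h_t). -/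
open Finset
open scoped Classical

/-!
STATEMENT 2: Let `p̂_π` be the trajectory distribution induced by a history-dependent
policy `π` with everywhere-positive action probabilities, let
`d(τ) = ρ₀(s₀) ∏_{t<T} P(s_{t+1}|s_t,a_t)` be the dynamics-only factor, and let the
target trajectory distribution be `p(τ) = d(τ)·exp(∑_t r(s_t,a_t))/Z` with
`Z = ∑_τ d(τ) exp(∑_t r(s_t,a_t))`.  Then `p̂_π ≪ p` and
`− D_KL(p̂_π ‖ p) = ∑_t E_{τ∼p̂_π}[r(s_t,a_t)] + ∑_t E_{τ∼p̂_π}[H(π(·|h_t))] − log Z`.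
-/

/-- A trajectory `τ = (s₀, a₀, …, s_T, a_T)` over horizon `T`. -/
abbrev Traj (S A : Type) (T : ℕ) := Fin (T + 1) → S × A

/-- The history `h_t = (s₀, a₀, …, s_t)` of a trajectory. -/
def histOf {S A : Type} {T : ℕ} (τ : Traj S A T) (t : Fin (T + 1)) :
    (Fin (t.1 + 1) → S) × (Fin t.1 → A) :=
  (fun i => (τ ⟨i.1, lt_of_le_of_lt (Nat.lt_succ_iff.mp i.2) t.2⟩).1,
   fun i => (τ ⟨i.1, lt_trans i.2 t.2⟩).2)

/-- A history-dependent policy. -/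
abbrev Policy (S A : Type) (T : ℕ) :=
  ∀ t : Fin (T + 1), ((Fin (t.1 + 1) → S) × (Fin t.1 → A)) → A → ℝ

/-- The induced trajectory distribution
`p̂_π(τ) = ρ₀(s₀) · ∏_{t=0}^{T} π(a_t | h_t) · ∏_{t=0}^{T-1} P(s_{t+1} | s_t, a_t)`. -/
def trajProb {S A : Type} [Fintype S] [Fintype A] {T : ℕ}
    (ρ₀ : S → ℝ) (P : S → A → S → ℝ) (π : Policy S A T) (τ : Traj S A T) : ℝ :=
  ρ₀ (τ 0).1 * (∏ t, π t (histOf τ t) (τ t).2) *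
    ∏ t : Fin T, P (τ t.castSucc).1 (τ t.castSucc).2 (τ t.succ).1

/-- The dynamics-only factor `d(τ) = ρ₀(s₀) ∏_{t=0}^{T-1} P(s_{t+1}|s_t,a_t)`. -/
def dynProb {S A : Type} [Fintype S] [Fintype A] {T : ℕ}
    (ρ₀ : S → ℝ) (P : S → A → S → ℝ) (τ : Traj S A T) : ℝ :=
  ρ₀ (τ 0).1 * ∏ t : Fin T, P (τ t.castSucc).1 (τ t.castSucc).2 (τ t.succ).1

/-- The normalizing constant `Z = ∑_τ d(τ) exp(∑_{t=0}^{T} r(s_t,a_t))`. -/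
noncomputable def partZ (S A : Type) [Fintype S] [Fintype A] (T : ℕ)
    (ρ₀ : S → ℝ) (P : S → A → S → ℝ) (r : S → A → ℝ) : ℝ :=
  ∑ τ : Traj S A T, dynProb ρ₀ P τ * Real.exp (∑ t, r (τ t).1 (τ t).2)

/-- The target (optimal) trajectory distribution `p(τ) = d(τ)·exp(∑_t r_t)/Z`. -/
noncomputable def targetProb {S A : Type} [Fintype S] [Fintype A] {T : ℕ}
    (ρ₀ : S → ℝ) (P : S → A → S → ℝ) (r : S → A → ℝ) (τ : Traj S A T) : ℝ :=
  dynProb ρ₀ P τ * Real.exp (∑ t, r (τ t).1 (τ t).2) / partZ S A T ρ₀ P r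


/-!
Both `p̂_π = d · ∏ₜ π(aₜ | hₜ)` and `p = d · exp(∑ₜ r)/Z` carry the dynamics factor `d`, so on the
support of `p̂_π` we get `log (p̂_π/p) = ∑ₜ log π(aₜ | hₜ) − ∑ₜ r(sₜ, aₜ) + log Z`. In expectation
under `p̂_π` the log-policy terms turn into entropies, because given `hₜ` the action `aₜ` is
distributed as `π(· | hₜ)`; this is proved by splitting off the first step `(s₀, a₀)` and recursing
on the horizon with the shifted policy. Finally `Z > 0` since `p̂_π` has total mass one and
vanishes wherever `d` does.
-/

section

variable {S A : Type}

-- Typed like `histOf τ 0`, so that `histOf_zero` can rewrite under `π 0`.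
def initHist {T : ℕ} (s : S) :
    (Fin ((0 : Fin (T + 1)).1 + 1) → S) × (Fin (0 : Fin (T + 1)).1 → A) :=
  (fun _ => s, Fin.elim0)

def shiftPolicy {T : ℕ} (π : Policy S A (T + 1)) (x : S × A) : Policy S A T :=
  fun t h => π t.succ (Fin.cons x.1 h.1, Fin.cons x.2 h.2)

theorem histOf_zero {T : ℕ} (τ : Traj S A T) : histOf τ 0 = initHist (τ 0).1 := by
  refine Prod.ext (funext fun i => ?_) (funext fun i => i.elim0)
  rw [Fin.fin_one_eq_zero i]; rfl

theorem histOf_cons_succ {T : ℕ} (x : S × A) (τ : Traj S A T) (t : Fin (T + 1)) :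
    histOf (Fin.cons x τ : Traj S A (T + 1)) t.succ
      = (Fin.cons x.1 (histOf τ t).1, Fin.cons x.2 (histOf τ t).2) := by
  refine Prod.ext (funext fun i => ?_) (funext fun i => ?_) <;> cases i using Fin.cases <;> rfl

variable [Fintype S] [Fintype A]

theorem trajProb_eq_dynProb_mul {T : ℕ} (ρ₀ : S → ℝ) (P : S → A → S → ℝ) (π : Policy S A T)
    (τ : Traj S A T) :
    trajProb ρ₀ P π τ = dynProb ρ₀ P τ * ∏ t, π t (histOf τ t) (τ t).2 := by
  rw [trajProb, dynProb]; ring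

theorem trajProb_const (ρ₀ : S → ℝ) (P : S → A → S → ℝ) (π : Policy S A 0) (x : S × A) :
    trajProb ρ₀ P π (fun _ => x) = ρ₀ x.1 * π 0 (initHist x.1) x.2 := by
  simp [trajProb, histOf_zero]

theorem trajProb_cons {T : ℕ} (ρ₀ : S → ℝ) (P : S → A → S → ℝ) (π : Policy S A (T + 1))
    (x : S × A) (τ : Traj S A T) :
    trajProb ρ₀ P π (Fin.cons x τ) =
      ρ₀ x.1 * π 0 (initHist x.1) x.2 * trajProb (P x.1 x.2) P (shiftPolicy π x) τ := by
  rw [trajProb, trajProb, Fin.prod_univ_succ (n := T), Fin.prod_univ_succ (n := T + 1)]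
  simp only [histOf_zero, histOf_cons_succ, Fin.cons_zero, Fin.cons_succ, Fin.castSucc_zero,
    ← Fin.succ_castSucc, shiftPolicy]
  ring

theorem sum_traj_zero (f : Traj S A 0 → ℝ) : ∑ τ : Traj S A 0, f τ = ∑ x : S × A, f fun _ => x :=
  (Fintype.sum_equiv (Equiv.funUnique (Fin 1) (S × A)).symm _ f fun _ => rfl).symm

theorem sum_traj_succ {T : ℕ} (f : Traj S A (T + 1) → ℝ) :
    ∑ τ : Traj S A (T + 1), f τ = ∑ x : S × A, ∑ τ : Traj S A T, f (Fin.cons x τ) := by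
  rw [← Fintype.sum_prod_type']
  exact (Fintype.sum_equiv (Fin.consEquiv fun _ => S × A) _ f fun _ => rfl).symm

theorem sum_trajProb_eq_one {T : ℕ} (ρ₀ : S → ℝ) (P : S → A → S → ℝ) (π : Policy S A T)
    (hρ₀ : ∑ s, ρ₀ s = 1) (hP : ∀ s a, ∑ s', P s a s' = 1) (hπ : ∀ t h, ∑ a, π t h a = 1) :
    ∑ τ : Traj S A T, trajProb ρ₀ P π τ = 1 := by
  induction T generalizing ρ₀ with
  | zero =>
    simp_rw [sum_traj_zero, trajProb_const, Fintype.sum_prod_type, ← Finset.mul_sum, hπ, mul_one,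
      hρ₀]
  | succ T ih =>
    simp_rw [sum_traj_succ, trajProb_cons, ← Finset.mul_sum,
      ih _ (shiftPolicy π _) (hP _ _) fun t _ => hπ t.succ _, mul_one, Fintype.sum_prod_type,
      ← Finset.mul_sum, hπ, mul_one, hρ₀]

theorem sum_trajProb_mul_head {T : ℕ} (ρ₀ : S → ℝ) (P : S → A → S → ℝ) (π : Policy S A T)
    (hP : ∀ s a, ∑ s', P s a s' = 1) (hπ : ∀ t h, ∑ a, π t h a = 1) (F : S × A → ℝ) :
    ∑ τ : Traj S A T, trajProb ρ₀ P π τ * F (τ 0)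
      = ∑ x : S × A, ρ₀ x.1 * π 0 (initHist x.1) x.2 * F x := by
  cases T with
  | zero => simp_rw [sum_traj_zero, trajProb_const]
  | succ T =>
    have hshift (x : S × A) : ∑ τ, trajProb (P x.1 x.2) P (shiftPolicy π x) τ = 1 :=
      sum_trajProb_eq_one _ P _ (hP x.1 x.2) hP fun t _ => hπ t.succ _
    simp_rw [sum_traj_succ, trajProb_cons, Fin.cons_zero, ← Finset.sum_mul, ← Finset.mul_sum,
      hshift, mul_one]

theorem sum_trajProb_mul_policy_zero {T : ℕ} (ρ₀ : S → ℝ) (P : S → A → S → ℝ)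
    (π : Policy S A T) (hP : ∀ s a, ∑ s', P s a s' = 1) (hπ : ∀ t h, ∑ a, π t h a = 1)
    (g : (Fin ((0 : Fin (T + 1)).1 + 1) → S) × (Fin (0 : Fin (T + 1)).1 → A) → A → ℝ) :
    ∑ τ : Traj S A T, trajProb ρ₀ P π τ * g (histOf τ 0) (τ 0).2
      = ∑ τ : Traj S A T, trajProb ρ₀ P π τ * ∑ a, π 0 (histOf τ 0) a * g (histOf τ 0) a := by
  simp_rw [histOf_zero]
  rw [sum_trajProb_mul_head ρ₀ P π hP hπ fun x => g (initHist x.1) x.2,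
    sum_trajProb_mul_head ρ₀ P π hP hπ fun x => ∑ a, π 0 (initHist x.1) a * g (initHist x.1) a,
    Fintype.sum_prod_type, Fintype.sum_prod_type]
  simp_rw [mul_assoc, ← Finset.mul_sum, ← Finset.sum_mul, hπ, one_mul]

theorem sum_trajProb_mul_policy {T : ℕ} (ρ₀ : S → ℝ) (P : S → A → S → ℝ)
    (π : Policy S A T) (hP : ∀ s a, ∑ s', P s a s' = 1) (hπ : ∀ t h, ∑ a, π t h a = 1)
    (t : Fin (T + 1)) (g : (Fin (t.1 + 1) → S) × (Fin t.1 → A) → A → ℝ) :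
    ∑ τ : Traj S A T, trajProb ρ₀ P π τ * g (histOf τ t) (τ t).2
      = ∑ τ : Traj S A T, trajProb ρ₀ P π τ * ∑ a, π t (histOf τ t) a * g (histOf τ t) a := by
  induction T generalizing ρ₀ with
  | zero =>
    obtain rfl := Fin.fin_one_eq_zero t
    exact sum_trajProb_mul_policy_zero ρ₀ P π hP hπ g
  | succ T ih =>
    rcases Fin.eq_zero_or_eq_succ t with rfl | ⟨t, rfl⟩
    · exact sum_trajProb_mul_policy_zero ρ₀ P π hP hπ g
    simp_rw [sum_traj_succ, trajProb_cons, histOf_cons_succ, Fin.cons_succ, mul_assoc,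
      ← Finset.mul_sum]
    refine Finset.sum_congr rfl fun x _ => congrArg _ (congrArg _ ?_)
    exact ih (P x.1 x.2) (shiftPolicy π x) (fun t _ => hπ t.succ _) t
      fun h a => g (Fin.cons x.1 h.1, Fin.cons x.2 h.2) a

theorem trajProb_nonneg {T : ℕ} (ρ₀ : S → ℝ) (P : S → A → S → ℝ) (π : Policy S A T)
    (hρ₀ : ∀ s, 0 ≤ ρ₀ s) (hP : ∀ s a s', 0 ≤ P s a s') (hπ : ∀ t h a, 0 ≤ π t h a)
    (τ : Traj S A T) : 0 ≤ trajProb ρ₀ P π τ :=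
  mul_nonneg (mul_nonneg (hρ₀ _) (Finset.prod_nonneg fun _ _ => hπ _ _ _))
    (Finset.prod_nonneg fun _ _ => hP _ _ _)

theorem dynProb_ne_zero_of_trajProb_ne_zero {T : ℕ} (ρ₀ : S → ℝ) (P : S → A → S → ℝ)
    (π : Policy S A T) {τ : Traj S A T} (hτ : trajProb ρ₀ P π τ ≠ 0) : dynProb ρ₀ P τ ≠ 0 := by
  rw [trajProb_eq_dynProb_mul] at hτ
  exact left_ne_zero_of_mul hτ

theorem partZ_pos {T : ℕ} (ρ₀ : S → ℝ) (P : S → A → S → ℝ) (r : S → A → ℝ) (π : Policy S A T)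
    (hρ₀ : ∀ s, 0 ≤ ρ₀ s) (hP : ∀ s a s', 0 ≤ P s a s')
    (hp : ∑ τ, trajProb ρ₀ P π τ = 1) : 0 < partZ S A T ρ₀ P r := by
  have hd_nonneg (τ : Traj S A T) : 0 ≤ dynProb ρ₀ P τ :=
    mul_nonneg (hρ₀ _) (Finset.prod_nonneg fun _ _ => hP _ _ _)
  obtain ⟨τ, -, hτ⟩ := Finset.exists_ne_zero_of_sum_ne_zero (hp ▸ one_ne_zero)
  have hd := (hd_nonneg τ).lt_of_ne' (dynProb_ne_zero_of_trajProb_ne_zero ρ₀ P π hτ)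
  exact Finset.sum_pos' (fun σ _ => mul_nonneg (hd_nonneg σ) (Real.exp_pos _).le)
    ⟨τ, Finset.mem_univ τ, mul_pos hd (Real.exp_pos _)⟩

theorem trajProb_eq_zero_of_targetProb_eq_zero {T : ℕ} (ρ₀ : S → ℝ) (P : S → A → S → ℝ)
    (r : S → A → ℝ) (π : Policy S A T) (hZ : partZ S A T ρ₀ P r ≠ 0) {τ : Traj S A T}
    (hτ : targetProb ρ₀ P r τ = 0) : trajProb ρ₀ P π τ = 0 := by
  rw [targetProb, div_eq_zero_iff, or_iff_left hZ, mul_eq_zero,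
    or_iff_left (Real.exp_ne_zero _)] at hτ
  rw [trajProb_eq_dynProb_mul, hτ, zero_mul]

theorem log_trajProb_div_targetProb {T : ℕ} (ρ₀ : S → ℝ) (P : S → A → S → ℝ) (r : S → A → ℝ)
    (π : Policy S A T) (hπ : ∀ t h a, 0 < π t h a) (hZ : partZ S A T ρ₀ P r ≠ 0)
    {τ : Traj S A T} (hτ : trajProb ρ₀ P π τ ≠ 0) :
    Real.log (trajProb ρ₀ P π τ / targetProb ρ₀ P r τ)
      = ∑ t, Real.log (π t (histOf τ t) (τ t).2) - ∑ t, r (τ t).1 (τ t).2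
        + Real.log (partZ S A T ρ₀ P r) := by
  have hd := dynProb_ne_zero_of_trajProb_ne_zero ρ₀ P π hτ
  have hprod : 0 < ∏ t, π t (histOf τ t) (τ t).2 := Finset.prod_pos fun _ _ => hπ _ _ _
  have hratio : trajProb ρ₀ P π τ / targetProb ρ₀ P r τ
      = (∏ t, π t (histOf τ t) (τ t).2) / Real.exp (∑ t, r (τ t).1 (τ t).2)
        * partZ S A T ρ₀ P r := by
    rw [trajProb_eq_dynProb_mul, targetProb]
    field_simp
  rw [hratio, Real.log_mul (div_pos hprod (Real.exp_pos _)).ne' hZ,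
    Real.log_div hprod.ne' (Real.exp_pos _).ne', Real.log_prod fun t _ => (hπ _ _ _).ne',
    Real.log_exp]

theorem sum_trajProb_mul_log_div_targetProb {T : ℕ} (ρ₀ : S → ℝ) (P : S → A → S → ℝ)
    (r : S → A → ℝ) (π : Policy S A T) (hρ₀ : ∀ s, 0 ≤ ρ₀ s) (hP : ∀ s a s', 0 ≤ P s a s')
    (hπ : ∀ t h a, 0 < π t h a) (hp : ∑ τ, trajProb ρ₀ P π τ = 1)
    (hZ : partZ S A T ρ₀ P r ≠ 0) :
    ∑ τ ∈ univ.filter (fun τ : Traj S A T => 0 < trajProb ρ₀ P π τ),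
        trajProb ρ₀ P π τ * Real.log (trajProb ρ₀ P π τ / targetProb ρ₀ P r τ)
      = ∑ t, ∑ τ, trajProb ρ₀ P π τ * Real.log (π t (histOf τ t) (τ t).2)
        - ∑ t, ∑ τ, trajProb ρ₀ P π τ * r (τ t).1 (τ t).2 + Real.log (partZ S A T ρ₀ P r) := by
  have hp_nonneg := trajProb_nonneg ρ₀ P π hρ₀ hP fun t h a => (hπ t h a).le
  have hterm (τ : Traj S A T) :
      trajProb ρ₀ P π τ * Real.log (trajProb ρ₀ P π τ / targetProb ρ₀ P r τ)
        = trajProb ρ₀ P π τ * (∑ t, Real.log (π t (histOf τ t) (τ t).2)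
          - ∑ t, r (τ t).1 (τ t).2 + Real.log (partZ S A T ρ₀ P r)) := by
    rcases eq_or_ne (trajProb ρ₀ P π τ) 0 with hτ | hτ
    · rw [hτ, zero_mul, zero_mul]
    · rw [log_trajProb_div_targetProb ρ₀ P r π hπ hZ hτ]
  rw [Finset.sum_filter_of_ne fun τ _ h => (hp_nonneg τ).lt_of_ne' (left_ne_zero_of_mul h),
    Finset.sum_congr rfl fun τ _ => hterm τ]
  simp only [mul_add, mul_sub, Finset.sum_add_distrib, Finset.sum_sub_distrib, ← Finset.sum_mul,
    hp, one_mul, Finset.mul_sum]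
  rw [Finset.sum_comm, Finset.sum_comm (f := fun τ t => trajProb ρ₀ P π τ * r (τ t).1 (τ t).2)]

theorem sum_trajProb_mul_entropy {T : ℕ} (ρ₀ : S → ℝ) (P : S → A → S → ℝ) (π : Policy S A T)
    (hP : ∀ s a, ∑ s', P s a s' = 1) (hπ_pos : ∀ t h a, 0 < π t h a)
    (hπ_sum : ∀ t h, ∑ a, π t h a = 1) (t : Fin (T + 1)) :
    ∑ τ : Traj S A T, trajProb ρ₀ P π τ *
        (-∑ a ∈ univ.filter (fun a : A => 0 < π t (histOf τ t) a),
          π t (histOf τ t) a * Real.log (π t (histOf τ t) a))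
      = -∑ τ, trajProb ρ₀ P π τ * Real.log (π t (histOf τ t) (τ t).2) := by
  simp only [Finset.filter_true_of_mem fun a _ => hπ_pos t _ a, mul_neg, Finset.sum_neg_distrib]
  rw [sum_trajProb_mul_policy ρ₀ P π hP hπ_sum t fun h a => Real.log (π t h a)]

end

theorem neg_kl_eq_reward_plus_entropy_sub_logZ_general
    {S A : Type} [Fintype S] [Fintype A] {T : ℕ}
    (ρ₀ : S → ℝ) (hρ₀ : (∀ s, 0 ≤ ρ₀ s) ∧ ∑ s, ρ₀ s = 1)
    (P : S → A → S → ℝ) (hP : ∀ s a, (∀ s', 0 ≤ P s a s') ∧ ∑ s', P s a s' = 1)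
    (r : S → A → ℝ)
    (π : Policy S A T) (hπ : ∀ t h, (∀ a, 0 < π t h a) ∧ ∑ a, π t h a = 1) :
    (∀ τ : Traj S A T, targetProb ρ₀ P r τ = 0 → trajProb ρ₀ P π τ = 0) ∧
    (-(∑ τ ∈ Finset.univ.filter (fun τ : Traj S A T => 0 < trajProb ρ₀ P π τ),
          trajProb ρ₀ P π τ * Real.log (trajProb ρ₀ P π τ / targetProb ρ₀ P r τ))
      = (∑ t : Fin (T + 1), ∑ τ : Traj S A T, trajProb ρ₀ P π τ * r (τ t).1 (τ t).2)
        + (∑ t : Fin (T + 1), ∑ τ : Traj S A T,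
            trajProb ρ₀ P π τ *
              (- ∑ a ∈ Finset.univ.filter (fun a : A => 0 < π t (histOf τ t) a),
                  π t (histOf τ t) a * Real.log (π t (histOf τ t) a)))
        - Real.log (partZ S A T ρ₀ P r)) := by
  obtain ⟨hρ₀_nonneg, hρ₀_sum⟩ := hρ₀
  have hP_nonneg s a : ∀ s', 0 ≤ P s a s' := (hP s a).1
  have hP_sum s a : ∑ s', P s a s' = 1 := (hP s a).2
  have hπ_pos t h : ∀ a, 0 < π t h a := (hπ t h).1
  have hπ_sum t h : ∑ a, π t h a = 1 := (hπ t h).2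
  have hp_sum := sum_trajProb_eq_one ρ₀ P π hρ₀_sum hP_sum hπ_sum
  have hZ := (partZ_pos ρ₀ P r π hρ₀_nonneg hP_nonneg hp_sum).ne'
  refine ⟨fun τ => trajProb_eq_zero_of_targetProb_eq_zero ρ₀ P r π hZ, ?_⟩
  rw [sum_trajProb_mul_log_div_targetProb ρ₀ P r π hρ₀_nonneg hP_nonneg hπ_pos hp_sum hZ,
    Finset.sum_congr rfl fun t _ => sum_trajProb_mul_entropy ρ₀ P π hP_sum hπ_pos hπ_sum t,
    Finset.sum_neg_distrib]
  ring

theorem neg_kl_eq_reward_plus_entropy_sub_logZ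
    {S A : Type} [Fintype S] [Fintype A] [Nonempty S] [Nonempty A] {T : ℕ}
    (ρ₀ : S → ℝ) (hρ₀ : (∀ s, 0 ≤ ρ₀ s) ∧ ∑ s, ρ₀ s = 1)
    (P : S → A → S → ℝ) (hP : ∀ s a, (∀ s', 0 ≤ P s a s') ∧ ∑ s', P s a s' = 1)
    (r : S → A → ℝ)
    (π : Policy S A T) (hπ : ∀ t h, (∀ a, 0 < π t h a) ∧ ∑ a, π t h a = 1) :
    (∀ τ : Traj S A T, targetProb ρ₀ P r τ = 0 → trajProb ρ₀ P π τ = 0) ∧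
    (-(∑ τ ∈ Finset.univ.filter (fun τ : Traj S A T => 0 < trajProb ρ₀ P π τ),
          trajProb ρ₀ P π τ * Real.log (trajProb ρ₀ P π τ / targetProb ρ₀ P r τ))
      = (∑ t : Fin (T + 1), ∑ τ : Traj S A T, trajProb ρ₀ P π τ * r (τ t).1 (τ t).2)
        + (∑ t : Fin (T + 1), ∑ τ : Traj S A T,
            trajProb ρ₀ P π τ *
              (- ∑ a ∈ Finset.univ.filter (fun a : A => 0 < π t (histOf τ t) a),
                  π t (histOf τ t) a * Real.log (π t (histOf τ t) a)))
        - Real.log (partZ S A T ρ₀ P r)) :=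
  neg_kl_eq_reward_plus_entropy_sub_logZ_general ρ₀ hρ₀ P hP r π hπ
end

section
/- Let p be a probability mass function on the product X × Y of two nonempty finite types with p(x, y) > 0 for all (x, y), let p_X, p_Y be its marginals, and let p(y | x) = p(x, y)/p_X(x) be the conditional. Then the mutual information is bounded above by the CLUB quantity computed with the true conditional: I(X; Y) ≤ E_{(x,y) ∼ p}[ log p(y | x) ] − E_{x ∼ p_X} E_{y ∼ p_Y}[ log p(y | x) ], where the second expectation is taken with x and y sampled independently from the two marginals. -/
open Finset

/-!
STATEMENT 6: For a fully-supported joint PMF `p` on `X × Y` (nonempty finite types), with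
marginals `p_X x = ∑ y, p (x, y)`, `p_Y y = ∑ x, p (x, y)` and conditional
`p(y|x) = p(x,y)/p_X x`, the mutual information is bounded above by the CLUB quantity
computed with the true conditional:
`I(X; Y) ≤ E_{(x,y)∼p}[log p(y|x)] − E_{x∼p_X} E_{y∼p_Y}[log p(y|x)]`.
-/
theorem mutualInfo_le_club
    {X Y : Type*} [Fintype X] [Fintype Y] [Nonempty X] [Nonempty Y]
    (p : X × Y → ℝ) (hpos : ∀ z, 0 < p z) (hsum : ∑ z, p z = 1) :
    (∑ z : X × Y, p z * Real.log (p z / ((∑ y, p (z.1, y)) * (∑ x, p (x, z.2)))))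
      ≤
    (∑ z : X × Y, p z * Real.log (p z / ∑ y, p (z.1, y)))
      - ∑ x : X, (∑ y, p (x, y)) *
          ∑ y : Y, (∑ x', p (x', y)) * Real.log (p (x, y) / ∑ y', p (x, y')) := by
  have hpXpos : ∀ x : X, 0 < ∑ y, p (x, y) := fun x =>
    Finset.sum_pos (fun y _ => hpos _) univ_nonempty
  have hpYpos : ∀ y : Y, 0 < ∑ x, p (x, y) := fun y =>
    Finset.sum_pos (fun x _ => hpos _) univ_nonempty
  set pX : X → ℝ := fun x => ∑ y, p (x, y) with hpX
  set pY : Y → ℝ := fun y => ∑ x, p (x, y) with hpY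
  have hsumX : ∑ x, pX x = 1 := by
    rw [← hsum, ← Fintype.sum_prod_type]
  -- B - A = Σ_y pY y * log (pY y)
  have hBA : (∑ z : X × Y, p z * Real.log (p z / pX z.1))
      - (∑ z : X × Y, p z * Real.log (p z / (pX z.1 * pY z.2)))
      = ∑ y : Y, pY y * Real.log (pY y) := by
    rw [← Finset.sum_sub_distrib]
    rw [Fintype.sum_prod_type_right]
    congr 1; funext y
    have hterm : ∀ x : X,
        p (x, y) * Real.log (p (x, y) / pX x)
          - p (x, y) * Real.log (p (x, y) / (pX x * pY y))
          = p (x, y) * Real.log (pY y) := by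
      intro x
      rw [← mul_sub]
      congr 1
      rw [Real.log_div (hpos (x, y)).ne' (hpXpos x).ne',
          Real.log_div (hpos (x, y)).ne' (mul_pos (hpXpos x) (hpYpos y)).ne',
          Real.log_mul (hpXpos x).ne' (hpYpos y).ne']
      ring
    calc (∑ x : X, (p (x, y) * Real.log (p (x, y) / pX x)
            - p (x, y) * Real.log (p (x, y) / (pX x * pY y))))
        = ∑ x : X, p (x, y) * Real.log (pY y) :=
          Finset.sum_congr rfl fun x _ => hterm x
      _ = pY y * Real.log (pY y) := by rw [← Finset.sum_mul]
  -- key: Σ_x pX x * log (p(x,y)/pX x) ≤ log (pY y)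
  have key : ∀ y : Y, ∑ x, pX x * Real.log (p (x, y) / pX x) ≤ Real.log (pY y) := by
    intro y
    have step : ∀ x : X, pX x * Real.log (p (x, y) / pX x) ≤
        (p (x, y) / pY y - pX x) + pX x * Real.log (pY y) := by
      intro x
      have hc : 0 < p (x, y) / pX x / pY y :=
        div_pos (div_pos (hpos (x, y)) (hpXpos x)) (hpYpos y)
      have hlog := Real.log_le_sub_one_of_pos hc
      have hsplit : Real.log (p (x, y) / pX x) =
          Real.log (p (x, y) / pX x / pY y) + Real.log (pY y) := by
        rw [Real.log_div (div_pos (hpos (x, y)) (hpXpos x)).ne' (hpYpos y).ne']; ring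
      have hmul : pX x * Real.log (p (x, y) / pX x / pY y) ≤
          pX x * (p (x, y) / pX x / pY y - 1) :=
        mul_le_mul_of_nonneg_left hlog (hpXpos x).le
      have heq : pX x * (p (x, y) / pX x / pY y - 1) = p (x, y) / pY y - pX x := by
        have h1 : pX x ≠ 0 := (hpXpos x).ne'
        have h2 : pY y ≠ 0 := (hpYpos y).ne'
        field_simp
      rw [hsplit, mul_add]
      nlinarith [hmul, heq]
    calc ∑ x, pX x * Real.log (p (x, y) / pX x)
        ≤ ∑ x, ((p (x, y) / pY y - pX x) + pX x * Real.log (pY y)) :=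
          Finset.sum_le_sum fun x _ => step x
      _ = Real.log (pY y) := by
          rw [Finset.sum_add_distrib, Finset.sum_sub_distrib, ← Finset.sum_div, ← Finset.sum_mul]
          rw [hsumX]
          have : (∑ x, p (x, y)) / pY y = 1 := div_self (hpYpos y).ne'
          rw [this]
          ring
  -- swap the double sum in C
  have hC : ∑ x : X, pX x * ∑ y : Y, pY y * Real.log (p (x, y) / pX x)
      = ∑ y : Y, pY y * ∑ x : X, pX x * Real.log (p (x, y) / pX x) := by
    simp_rw [Finset.mul_sum]
    rw [Finset.sum_comm]
    exact Finset.sum_congr rfl fun y _ => Finset.sum_congr rfl fun x _ => by ring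
  have hCle : ∑ x : X, pX x * ∑ y : Y, pY y * Real.log (p (x, y) / pX x)
      ≤ ∑ y : Y, pY y * Real.log (pY y) := by
    rw [hC]
    exact Finset.sum_le_sum fun y _ =>
      mul_le_mul_of_nonneg_left (key y) (hpYpos y).le
  linarith [hBA, hCle]
end
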